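/- Let N = Z^2 with dual M, let a1 != a2 in N and chi in M with chi(a1) = chi(a2) = 1, and let L be the lattice length of a1 - a2. For a positive integer b <= L, the set of all chi' in M satisfying chi'(a1) >= 0, chi'(a2) >= 0, chi'(a1) < b, and chi'(a2) < b consists exactly of the multiples b'*chi with integers 0 <= b' < b. -/

import Mathlib

/-!
Every `χ'` takes values on `a1` and `a2` that are congruent modulo the lattice length `L` of
`a1 - a2`; if both lie in `[0, b)` with `b ≤ L` they are therefore equal, say to `b'`. Since `χ`
takes the same value on `a1 ≠ a2`, these two vectors are linearly independent, so `χ' - b' • χ`,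
which vanishes on both, is zero.
-/

open Matrix

/-- The lattice length of `v ∈ ℤ²`: the largest integer `d` such that `v/d` is a lattice
vector, i.e. the gcd of the coordinates of `v` (for `v ≠ 0`). -/
def latticeLength2 (v : Fin 2 → ℤ) : ℕ := Int.gcd (v 0) (v 1)

theorem latticeLength2_dvd_dotProduct (w v : Fin 2 → ℤ) :
    (latticeLength2 v : ℤ) ∣ w ⬝ᵥ v := by
  rw [dotProduct, Fin.sum_univ_two]
  exact dvd_add (dvd_mul_of_dvd_right (Int.gcd_dvd_left _ _) _)
    (dvd_mul_of_dvd_right (Int.gcd_dvd_right _ _) _)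

theorem Int.eq_of_dvd_sub_of_mem_Ico {x y n : ℤ} (hn : n ∣ x - y)
    (hx : 0 ≤ x) (hxn : x < n) (hy : 0 ≤ y) (hyn : y < n) : x = y :=
  sub_eq_zero.mp <| Int.eq_zero_of_abs_lt_dvd hn <| abs_sub_lt_iff.mpr ⟨by omega, by omega⟩

section TwoPoints

variable {R : Type*} [CommRing R] [IsDomain R] {a1 a2 chi : Fin 2 → R}

theorem det_ne_zero_of_dotProduct_eq_one (hne : a1 ≠ a2) (h1 : chi ⬝ᵥ a1 = 1)
    (h2 : chi ⬝ᵥ a2 = 1) : (Matrix.of ![a1, a2]).det ≠ 0 := by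
  intro hdet
  obtain ⟨v, hv, hvM⟩ := exists_vecMul_eq_zero_iff.mpr hdet
  have hcomb : v 0 • a1 + v 1 • a2 = 0 := by
    simpa [vecMul_cons, vecHead, vecTail] using hvM
  have hsum : v 0 + v 1 = 0 := by
    simpa [dotProduct_add, dotProduct_smul, h1, h2] using congrArg (chi ⬝ᵥ ·) hcomb
  have hv0 : v 0 = 0 := by
    have : v 0 • (a1 - a2) = 0 := by
      rw [smul_sub, ← hcomb, eq_neg_of_add_eq_zero_right hsum, neg_smul]; abel
    exact (smul_eq_zero.mp this).resolve_right (sub_ne_zero.mpr hne)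
  exact hv (by ext i; fin_cases i <;> simp [hv0, eq_neg_of_add_eq_zero_right hsum])

theorem eq_smul_of_dotProduct_eq (hne : a1 ≠ a2) (h1 : chi ⬝ᵥ a1 = 1) (h2 : chi ⬝ᵥ a2 = 1)
    {chi' : Fin 2 → R} (h : chi' ⬝ᵥ a1 = chi' ⬝ᵥ a2) : chi' = (chi' ⬝ᵥ a1) • chi := by
  rw [← sub_eq_zero]
  refine eq_zero_of_mulVec_eq_zero (det_ne_zero_of_dotProduct_eq_one hne h1 h2) ?_
  ext i
  fin_cases i <;> simp [cons_mulVec, dotProduct_comm _ chi', dotProduct_comm _ chi, h1, h2, h]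

end TwoPoints

theorem stmt9_general (a1 a2 chi : Fin 2 → ℤ)
    (hne : a1 ≠ a2) (h1 : chi ⬝ᵥ a1 = 1) (h2 : chi ⬝ᵥ a2 = 1)
    (b : ℕ) (hbL : b ≤ latticeLength2 (a1 - a2)) :
    ∀ chi' : Fin 2 → ℤ,
      (0 ≤ chi' ⬝ᵥ a1 ∧ 0 ≤ chi' ⬝ᵥ a2 ∧ chi' ⬝ᵥ a1 < (b : ℤ) ∧ chi' ⬝ᵥ a2 < (b : ℤ)) ↔
      ∃ b' : ℤ, 0 ≤ b' ∧ b' < (b : ℤ) ∧ chi' = b' • chi := by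
  intro chi'
  constructor
  · rintro ⟨h0a1, h0a2, hlt1, hlt2⟩
    have hbL' : (b : ℤ) ≤ latticeLength2 (a1 - a2) := by exact_mod_cast hbL
    have heq : chi' ⬝ᵥ a1 = chi' ⬝ᵥ a2 := by
      refine Int.eq_of_dvd_sub_of_mem_Ico ?_ h0a1 (hlt1.trans_le hbL') h0a2 (hlt2.trans_le hbL')
      simpa only [dotProduct_sub] using latticeLength2_dvd_dotProduct chi' (a1 - a2)
    exact ⟨_, h0a1, hlt1, eq_smul_of_dotProduct_eq hne h1 h2 heq⟩
  · rintro ⟨b', hb'0, hb'b, rfl⟩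
    simp only [smul_dotProduct, h1, h2, smul_eq_mul, mul_one]
    exact ⟨hb'0, hb'0, hb'b, hb'b⟩

/-- second part of Lemma `smalllaticepoints`: let `N = ℤ²` with dual
`M`, `a1 ≠ a2` in `N`, `χ ∈ M` with `χ(a1) = χ(a2) = 1`, and let `L` be the lattice length
of `a1 - a2`.  For a positive integer `b ≤ L`, the set of all `χ' ∈ M` with
`χ'(a1) ≥ 0`, `χ'(a2) ≥ 0`, `χ'(a1) < b` and `χ'(a2) < b` consists exactly of the
multiples `b' • χ` with `0 ≤ b' < b`. -/
theorem stmt9 (a1 a2 chi : Fin 2 → ℤ)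
    (hne : a1 ≠ a2) (h1 : chi ⬝ᵥ a1 = 1) (h2 : chi ⬝ᵥ a2 = 1)
    (b : ℕ) (hb : 0 < b) (hbL : b ≤ latticeLength2 (a1 - a2)) :
    ∀ chi' : Fin 2 → ℤ,
      (0 ≤ chi' ⬝ᵥ a1 ∧ 0 ≤ chi' ⬝ᵥ a2 ∧ chi' ⬝ᵥ a1 < (b : ℤ) ∧ chi' ⬝ᵥ a2 < (b : ℤ)) ↔
      ∃ b' : ℤ, 0 ≤ b' ∧ b' < (b : ℤ) ∧ chi' = b' • chi :=
  stmt9_general a1 a2 chi hne h1 h2 b hbL
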